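/- arXiv:2508.08299 — 6 statements merged into one kernel-verified Lean document; each statement's English description precedes it below -/
import Mathlib

section
/- For every configuration x : Fin n → ℝ and all indices i, j, if x(i) ≤ x(j) then T(x)(i) ≤ T(x)(j). In particular, if x is nondecreasing (i ≤ j implies x(i) ≤ x(j)), then T(x) is nondecreasing. -/
/-- The Hegselmann–Krause update with radius `R = 1` on configurations of `n` points:
each point moves to the average of all points (including itself) within distance `1`. -/
noncomputable def hkUpdate {n : ℕ} (x : Fin n → ℝ) : Fin n → ℝ := fun i =>
  (∑ j ∈ Finset.univ.filter (fun j => |x j - x i| ≤ 1), x j) /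
    ((Finset.univ.filter (fun j : Fin n => |x j - x i| ≤ 1)).card : ℝ)

open Finset

lemma hk_avg_le_of_forall {α : Type*} (f : α → ℝ) (S : Finset α) (hS : S.Nonempty)
    (c : ℝ) (h : ∀ k ∈ S, f k ≤ c) : (∑ k ∈ S, f k) / S.card ≤ c := by
  have hc : (0 : ℝ) < S.card := by exact_mod_cast hS.card_pos
  rw [div_le_iff₀ hc]
  calc ∑ k ∈ S, f k ≤ S.card • c := Finset.sum_le_card_nsmul S f c h
    _ = c * S.card := by rw [nsmul_eq_mul]; ring

lemma hk_le_avg_of_forall {α : Type*} (f : α → ℝ) (S : Finset α) (hS : S.Nonempty)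
    (c : ℝ) (h : ∀ k ∈ S, c ≤ f k) : c ≤ (∑ k ∈ S, f k) / S.card := by
  have hc : (0 : ℝ) < S.card := by exact_mod_cast hS.card_pos
  rw [le_div_iff₀ hc]
  calc c * S.card = S.card • c := by rw [nsmul_eq_mul]; ring
    _ ≤ ∑ k ∈ S, f k := Finset.card_nsmul_le_sum S f c h

lemma hk_avg_le_avg_subset {α : Type*} [DecidableEq α] (f : α → ℝ) (S B : Finset α)
    (hBS : B ⊆ S) (hB : B.Nonempty) (c : ℝ)
    (hout : ∀ k ∈ S, k ∉ B → f k ≤ c) (hin : ∀ k ∈ B, c ≤ f k) :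
    (∑ k ∈ S, f k) / S.card ≤ (∑ k ∈ B, f k) / B.card := by
  have hS : S.Nonempty := hB.mono hBS
  have hcS : (0 : ℝ) < S.card := by exact_mod_cast hS.card_pos
  have hcB : (0 : ℝ) < B.card := by exact_mod_cast hB.card_pos
  have hsplitS : ∑ k ∈ S \ B, f k + ∑ k ∈ B, f k = ∑ k ∈ S, f k :=
    Finset.sum_sdiff hBS
  have hcard : (S \ B).card + B.card = S.card := Finset.card_sdiff_add_card_eq_card hBS
  have hA : ∑ k ∈ S \ B, f k ≤ (S \ B).card * c := by
    calc ∑ k ∈ S \ B, f k ≤ (S \ B).card • c :=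
          Finset.sum_le_card_nsmul _ f c (fun k hk => by
            rcases Finset.mem_sdiff.mp hk with ⟨h1, h2⟩
            exact hout k h1 h2)
      _ = (S \ B).card * c := by rw [nsmul_eq_mul]
  have hBsum : (B.card : ℝ) * c ≤ ∑ k ∈ B, f k := by
    calc (B.card : ℝ) * c = B.card • c := by rw [nsmul_eq_mul]
      _ ≤ ∑ k ∈ B, f k := Finset.card_nsmul_le_sum B f c hin
  rw [div_le_div_iff₀ hcS hcB]
  have hScard : (S.card : ℝ) = (S \ B).card + B.card := by exact_mod_cast hcard.symm
  have hAc : (0 : ℝ) ≤ (S \ B).card := Nat.cast_nonneg _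
  have key : (∑ k ∈ S \ B, f k) * (B.card : ℝ) ≤ (∑ k ∈ B, f k) * ((S \ B).card : ℝ) := by
    calc (∑ k ∈ S \ B, f k) * (B.card : ℝ)
        ≤ (((S \ B).card : ℝ) * c) * B.card := mul_le_mul_of_nonneg_right hA hcB.le
      _ = ((S \ B).card : ℝ) * ((B.card : ℝ) * c) := by ring
      _ ≤ ((S \ B).card : ℝ) * (∑ k ∈ B, f k) := mul_le_mul_of_nonneg_left hBsum hAc
      _ = (∑ k ∈ B, f k) * ((S \ B).card : ℝ) := by ring
  calc (∑ k ∈ S, f k) * (B.card : ℝ)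
      = (∑ k ∈ S \ B, f k) * B.card + (∑ k ∈ B, f k) * B.card := by rw [← hsplitS]; ring
    _ ≤ (∑ k ∈ B, f k) * ((S \ B).card : ℝ) + (∑ k ∈ B, f k) * B.card := by linarith
    _ = (∑ k ∈ B, f k) * (S.card : ℝ) := by rw [hScard]; ring

lemma hk_avg_subset_le_avg {α : Type*} [DecidableEq α] (f : α → ℝ) (S B : Finset α)
    (hBS : B ⊆ S) (hB : B.Nonempty) (c : ℝ)
    (hout : ∀ k ∈ S, k ∉ B → c ≤ f k) (hin : ∀ k ∈ B, f k ≤ c) :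
    (∑ k ∈ B, f k) / B.card ≤ (∑ k ∈ S, f k) / S.card := by
  have h := hk_avg_le_avg_subset (fun k => -f k) S B hBS hB (-c)
    (fun k h1 h2 => by simpa using hout k h1 h2)
    (fun k h1 => by simpa using hin k h1)
  have hS : S.Nonempty := hB.mono hBS
  have hcS : (0 : ℝ) < S.card := by exact_mod_cast hS.card_pos
  have hcB : (0 : ℝ) < B.card := by exact_mod_cast hB.card_pos
  simp only [Finset.sum_neg_distrib, neg_div] at h
  linarith [h]

/-- The HK update preserves the order of points; in particular it preserves
nondecreasing configurations. -/
theorem hkUpdate_order_preserving {n : ℕ} (x : Fin n → ℝ) :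
    (∀ i j : Fin n, x i ≤ x j → hkUpdate x i ≤ hkUpdate x j) ∧
    (Monotone x → Monotone (hkUpdate x)) := by
  have main : ∀ i j : Fin n, x i ≤ x j → hkUpdate x i ≤ hkUpdate x j := by
    intro i j hij
    classical
    set Ni := Finset.univ.filter (fun k : Fin n => |x k - x i| ≤ 1) with hNi
    set Nj := Finset.univ.filter (fun k : Fin n => |x k - x j| ≤ 1) with hNj
    have hiNi : i ∈ Ni := by simp [hNi]
    have hjNj : j ∈ Nj := by simp [hNj]
    have hNine : Ni.Nonempty := ⟨i, hiNi⟩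
    have hNjne : Nj.Nonempty := ⟨j, hjNj⟩
    have memNi : ∀ k, k ∈ Ni ↔ |x k - x i| ≤ 1 := by intro k; simp [hNi]
    have memNj : ∀ k, k ∈ Nj ↔ |x k - x j| ≤ 1 := by intro k; simp [hNj]
    -- points in Ni but not Nj are ≤ x j - 1
    have hA : ∀ k, k ∈ Ni → k ∉ Nj → x k ≤ x j - 1 := by
      intro k h1 h2
      have h1' := abs_le.mp ((memNi k).mp h1)
      have h2' : 1 < |x k - x j| := not_le.mp (fun h => h2 ((memNj k).mpr h))
      rcases lt_abs.mp h2' with h | h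
      · linarith [h1'.1, h1'.2]
      · linarith [h1'.1, h1'.2]
    -- points in Nj but not Ni are ≥ x i + 1
    have hC : ∀ k, k ∈ Nj → k ∉ Ni → x i + 1 ≤ x k := by
      intro k h1 h2
      have h1' := abs_le.mp ((memNj k).mp h1)
      have h2' : 1 < |x k - x i| := not_le.mp (fun h => h2 ((memNi k).mpr h))
      rcases lt_abs.mp h2' with h | h
      · linarith
      · linarith [h1'.1, h1'.2]
    have goal_eq : hkUpdate x i = (∑ k ∈ Ni, x k) / Ni.card ∧
        hkUpdate x j = (∑ k ∈ Nj, x k) / Nj.card := by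
      constructor <;> rfl
    rw [goal_eq.1, goal_eq.2]
    by_cases hB : (Ni ∩ Nj).Nonempty
    · have hBi : Ni ∩ Nj ⊆ Ni := Finset.inter_subset_left
      have hBj : Ni ∩ Nj ⊆ Nj := Finset.inter_subset_right
      have step1 : (∑ k ∈ Ni, x k) / Ni.card ≤ (∑ k ∈ Ni ∩ Nj, x k) / (Ni ∩ Nj).card := by
        apply hk_avg_le_avg_subset x Ni (Ni ∩ Nj) hBi hB (x j - 1)
        · intro k h1 h2
          have h2' : k ∉ Nj := fun hk => h2 (Finset.mem_inter.mpr ⟨h1, hk⟩)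
          exact hA k h1 h2'
        · intro k hk
          have := abs_le.mp ((memNj k).mp (hBj hk))
          linarith [this.1]
      have step2 : (∑ k ∈ Ni ∩ Nj, x k) / (Ni ∩ Nj).card ≤ (∑ k ∈ Nj, x k) / Nj.card := by
        apply hk_avg_subset_le_avg x Nj (Ni ∩ Nj) hBj hB (x i + 1)
        · intro k h1 h2
          have h2' : k ∉ Ni := fun hk => h2 (Finset.mem_inter.mpr ⟨hk, h1⟩)
          exact hC k h1 h2'
        · intro k hk
          have := abs_le.mp ((memNi k).mp (hBi hk))
          linarith [this.2]
      linarith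
    · -- Ni ∩ Nj empty: every k ∈ Ni is not in Nj, so avg Ni ≤ x j - 1 ≤ avg Nj
      have hnotin : ∀ k ∈ Ni, k ∉ Nj := by
        intro k h1 h2
        exact hB ⟨k, Finset.mem_inter.mpr ⟨h1, h2⟩⟩
      have step1 : (∑ k ∈ Ni, x k) / Ni.card ≤ x j - 1 :=
        hk_avg_le_of_forall x Ni hNine _ (fun k hk => hA k hk (hnotin k hk))
      have step2 : x j - 1 ≤ (∑ k ∈ Nj, x k) / Nj.card := by
        apply hk_le_avg_of_forall x Nj hNjne
        intro k hk
        have := abs_le.mp ((memNj k).mp hk)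
        linarith [this.1]
      linarith
  exact ⟨main, fun hm i j hij => main i j (hm hij)⟩
end

section
/- For every configuration x : Fin n → ℝ and all indices i, j: if i and j lie in the same connected component of the geometric graph of T(x), then i and j lie in the same connected component of the geometric graph of x. Consequently, for every i, the connected component of i with respect to T(x) is contained in the connected component of i with respect to x, and the component sizes #C are nonincreasing under iteration of T. -/
/-- The geometric graph of a configuration: distinct `i`, `j` are adjacent iff
`|x i - x j| ≤ 1`. -/
def geomGraph {n : ℕ} (x : Fin n → ℝ) : SimpleGraph (Fin n) where
  Adj i j := i ≠ j ∧ |x i - x j| ≤ 1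
  symm := ⟨fun i j h => ⟨h.1.symm, by rw [abs_sub_comm]; exact h.2⟩⟩
  loopless := ⟨fun i h => h.1 rfl⟩

open Finset SimpleGraph
open scoped BigOperators

namespace geomGraph

variable {n : ℕ} (x : Fin n → ℝ)

lemma reachable_of_abs_sub_le {i j : Fin n} (h : |x i - x j| ≤ 1) :
    (geomGraph x).Reachable i j := by
  obtain rfl | hij := eq_or_ne i j
  · exact .refl i
  · exact Adj.reachable ⟨hij, h⟩

variable {x}

/-- A walk that starts at or below the level `c` and ends within `1` below it must visit the
band `[c - 1, c]`, since no edge jumps over it. -/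
lemma exists_reachable_mem_Icc {u v : Fin n} {c : ℝ} (h : (geomGraph x).Reachable u v)
    (hu : x u ≤ c) (hv : c ≤ x v + 1) :
    ∃ w, (geomGraph x).Reachable u w ∧ x w ∈ Set.Icc (c - 1) c := by
  obtain ⟨p⟩ := h
  induction p with
  | nil => exact ⟨_, .refl _, by linarith, hu⟩
  | @cons a b v hab _ ih =>
    by_cases hb : x b ≤ c
    · obtain ⟨w, hw, hwc⟩ := ih hb hv
      exact ⟨w, hab.reachable.trans hw, hwc⟩
    · have hba : -1 ≤ x a - x b := (abs_le.mp hab.2).1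
      exact ⟨a, .refl a, by linarith, hu⟩

lemma reachable_of_le_of_le_add_one {u v u' : Fin n} (h : (geomGraph x).Reachable u v)
    (hu : x u ≤ x u') (hv : x u' ≤ x v + 1) : (geomGraph x).Reachable u u' := by
  obtain ⟨w, huw, hw⟩ := exists_reachable_mem_Icc h hu hv
  have hclose : |x w - x u'| ≤ 1 := abs_le.mpr ⟨by linarith [hw.1], by linarith [hw.2]⟩
  exact huw.trans (reachable_of_abs_sub_le x hclose)

end geomGraph

noncomputable def hkNeighbors {n : ℕ} (x : Fin n → ℝ) (i : Fin n) : Finset (Fin n) :=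
  univ.filter (fun j => |x j - x i| ≤ 1)

namespace hkUpdate

variable {n : ℕ} (x : Fin n → ℝ) (i : Fin n)

lemma eq_expect : hkUpdate x i = 𝔼 j ∈ hkNeighbors x i, x j :=
  (expect_eq_sum_div_card _ _).symm

lemma reachable_of_mem_hkNeighbors {j : Fin n} (hj : j ∈ hkNeighbors x i) :
    (geomGraph x).Reachable i j :=
  geomGraph.reachable_of_abs_sub_le x <| by rw [abs_sub_comm]; exact (mem_filter.mp hj).2

lemma hkNeighbors_nonempty : (hkNeighbors x i).Nonempty :=
  ⟨i, by simp [hkNeighbors]⟩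

lemma exists_reachable_le : ∃ k, (geomGraph x).Reachable i k ∧ x k ≤ hkUpdate x i := by
  obtain ⟨k, hk, hle⟩ := exists_le_of_expect_le (hkNeighbors_nonempty x i) (eq_expect x i).ge
  exact ⟨k, reachable_of_mem_hkNeighbors x i hk, hle⟩

lemma exists_reachable_ge : ∃ k, (geomGraph x).Reachable i k ∧ hkUpdate x i ≤ x k := by
  obtain ⟨k, hk, hle⟩ := exists_le_of_le_expect (hkNeighbors_nonempty x i) (eq_expect x i).le
  exact ⟨k, reachable_of_mem_hkNeighbors x i hk, hle⟩

variable {x}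

lemma reachable_of_abs_sub_le {i j : Fin n} (h : |hkUpdate x i - hkUpdate x j| ≤ 1) :
    (geomGraph x).Reachable i j := by
  obtain ⟨k, hik, hk⟩ := exists_reachable_le x i
  obtain ⟨k', hik', hk'⟩ := exists_reachable_ge x i
  obtain ⟨m, hjm, hm⟩ := exists_reachable_le x j
  obtain ⟨m', hjm', hm'⟩ := exists_reachable_ge x j
  have hij := abs_le.mp h
  rcases le_total (x k) (x m) with hkm | hmk
  · have := geomGraph.reachable_of_le_of_le_add_one (hik.symm.trans hik') hkm (by linarith)
    exact (hik.trans this).trans hjm.symm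
  · have := geomGraph.reachable_of_le_of_le_add_one (hjm.symm.trans hjm') hmk (by linarith)
    exact ((hjm.trans this).trans hik.symm).symm

lemma reachable_of_reachable_hkUpdate {i j : Fin n} (h : (geomGraph (hkUpdate x)).Reachable i j) :
    (geomGraph x).Reachable i j := by
  obtain ⟨p⟩ := h
  induction p with
  | nil => exact .refl _
  | cons hab _ ih => exact (reachable_of_abs_sub_le hab.2).trans ih

end hkUpdate

/-- Connectivity only decreases under the HK update: points in the same connected
component after the update were in the same connected component before; consequently
components shrink and component sizes are nonincreasing under iteration. -/
theorem hkUpdate_components_shrink {n : ℕ} (x : Fin n → ℝ) :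
    (∀ i j : Fin n,
      (geomGraph (hkUpdate x)).Reachable i j → (geomGraph x).Reachable i j) ∧
    (∀ i : Fin n,
      {j | (geomGraph (hkUpdate x)).Reachable i j} ⊆ {j | (geomGraph x).Reachable i j}) ∧
    (∀ t : ℕ, ∀ i : Fin n,
      ({j | (geomGraph (hkUpdate^[t + 1] x)).Reachable i j} : Set (Fin n)).ncard ≤
        ({j | (geomGraph (hkUpdate^[t] x)).Reachable i j} : Set (Fin n)).ncard) := by
  open hkUpdate in
  refine ⟨fun _ _ => reachable_of_reachable_hkUpdate, fun _ _ => reachable_of_reachable_hkUpdate,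
    fun t i => Set.ncard_le_ncard (fun j hj => ?_) (Set.toFinite _)⟩
  rw [Set.mem_ofPred_eq, Function.iterate_succ_apply'] at hj
  exact hkUpdate.reachable_of_reachable_hkUpdate hj
end

section
/- Let x : Fin n → ℝ be nondecreasing and let indices a ≤ b be such that x(k+1) − x(k) ≤ 1 for all a ≤ k < b, x(a) − x(a−1) > 1 if a > 0, and x(b+1) − x(b) > 1 if b + 1 < n (i.e., the index interval [a, b] is a connected component). Define the restricted configuration y : Fin (b−a+1) → ℝ by y(k) = x(a+k), and let T' denote the HK update on configurations of length b−a+1. Then for every index i with a ≤ i ≤ b, T(x)(i) = T'(y)(i − a); that is, the HK update of a point depends only on the points in its connected component. -/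
theorem hkUpdate_comp_embedding {m n : ℕ} (e : Fin m ↪ Fin n) (x : Fin n → ℝ) (k : Fin m)
    (hrange : ∀ j, |x j - x (e k)| ≤ 1 → j ∈ Set.range e) :
    hkUpdate (x ∘ e) k = hkUpdate x (e k) := by
  have hneighbours : Finset.univ.filter (fun j => |x j - x (e k)| ≤ 1) =
      (Finset.univ.filter (fun l => |x (e l) - x (e k)| ≤ 1)).map e := by
    ext j
    simp only [Finset.mem_filter, Finset.mem_univ, true_and, Finset.mem_map]
    constructor
    · intro hj
      obtain ⟨l, rfl⟩ := hrange j hj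
      exact ⟨l, hj, rfl⟩
    · rintro ⟨l, hl, rfl⟩
      exact hl
  simp only [hkUpdate, hneighbours, Finset.sum_map, Finset.card_map, Function.comp_apply]

theorem one_lt_abs_sub_of_gap {ι : Type*} [Preorder ι] {x : ι → ℝ} (hx : Monotone x)
    {p q i j : ι} (hgap : 1 < x q - x p) (hjp : j ≤ p) (hqi : q ≤ i) :
    1 < |x i - x j| := by
  have := hx hjp
  have := hx hqi
  exact lt_abs.mpr (Or.inl (by linarith))

def Fin.intervalEmb {n : ℕ} (a m : ℕ) (h : a + m ≤ n) : Fin m ↪ Fin n where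
  toFun k := ⟨a + k, by omega⟩
  inj' k l hkl := Fin.ext (by simpa using congrArg Fin.val hkl)

@[simp]
theorem Fin.val_intervalEmb {n a m : ℕ} (h : a + m ≤ n) (k : Fin m) :
    (Fin.intervalEmb a m h k : ℕ) = a + k :=
  rfl

theorem Fin.mem_range_intervalEmb {n a m : ℕ} (h : a + m ≤ n) {j : Fin n}
    (haj : a ≤ j) (hjm : (j : ℕ) < a + m) : j ∈ Set.range (Fin.intervalEmb a m h) :=
  ⟨⟨j - a, by omega⟩, Fin.ext (by simp only [Fin.val_intervalEmb]; omega)⟩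

/-- If the index interval `[a, b]` is a connected component of a nondecreasing
configuration `x` (consecutive gaps within `[a, b]` are at most `1`, and the gaps at the
boundary exceed `1`), then on `[a, b]` the HK update of `x` agrees with the HK update of
the restricted configuration `y k = x (a + k)` of length `b - a + 1`: the update of a
point depends only on the points in its connected component. -/
theorem hkUpdate_restrict_component {n : ℕ} (x : Fin n → ℝ) (hx : Monotone x)
    (a b : Fin n)
    (hleft : ∀ _ : 0 < (a : ℕ), x a - x ⟨(a : ℕ) - 1, by have := a.isLt; omega⟩ > 1)
    (hright : ∀ hb : (b : ℕ) + 1 < n, x ⟨(b : ℕ) + 1, hb⟩ - x b > 1) :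
    ∀ i : Fin n, (hai : (a : ℕ) ≤ i) → (hib : (i : ℕ) ≤ b) →
      hkUpdate x i =
        hkUpdate (fun k : Fin ((b : ℕ) - (a : ℕ) + 1) =>
            x ⟨(a : ℕ) + (k : ℕ), by have := k.isLt; have := b.isLt; omega⟩)
          ⟨(i : ℕ) - (a : ℕ), by omega⟩ := by
  intro i hai hib
  have hbn := b.isLt
  have hneighbours : ∀ j, |x j - x i| ≤ 1 → (a : ℕ) ≤ j ∧ (j : ℕ) ≤ b := by
    intro j hj
    constructor
    · by_contra! hja
      exact hj.not_gt (abs_sub_comm (x j) (x i) ▸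
        one_lt_abs_sub_of_gap hx (hleft (by omega)) (Fin.le_def.mpr (Nat.le_sub_one_of_lt hja)) hai)
    · by_contra! hbj
      exact hj.not_gt (one_lt_abs_sub_of_gap hx (hright (by omega)) hib
        (Fin.le_def.mpr hbj))
  set e := Fin.intervalEmb (n := n) a ((b : ℕ) - a + 1) (by omega)
  set k : Fin ((b : ℕ) - a + 1) := ⟨(i : ℕ) - a, by omega⟩
  have hek : e k = i := Fin.ext (by simp only [e, k, Fin.val_intervalEmb]; omega)
  have hrange : ∀ j, |x j - x (e k)| ≤ 1 → j ∈ Set.range e := by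
    rw [hek]
    intro j hj
    obtain ⟨haj, hjb⟩ := hneighbours j hj
    exact Fin.mem_range_intervalEmb _ haj (by omega)
  calc hkUpdate x i = hkUpdate x (e k) := by rw [hek]
    _ = hkUpdate (x ∘ e) k := (hkUpdate_comp_embedding e x k hrange).symm
end

section
/- Let x : Fin n → ℝ be a configuration with T(x) = x. Then for all indices i, j, either x(i) = x(j) or |x(i) − x(j)| > 1. In other words, every fixed point of the HK update consists of clusters of co-located points such that any two distinct cluster locations are at distance strictly greater than 1. -/
/-- Every fixed point of the HK update consists of clusters of co-located points such
that any two distinct cluster locations are at distance strictly greater than `1`. -/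
theorem hkUpdate_clusters_of_fixed {n : ℕ} (x : Fin n → ℝ) (h : hkUpdate x = x) :
    ∀ i j : Fin n, x i = x j ∨ |x i - x j| > 1 := by
  by_contra hc
  push_neg at hc
  obtain ⟨i0, j0, hne, hle⟩ := hc
  have hle' := abs_le.mp hle
  set S : Finset (Fin n × Fin n) :=
    Finset.univ.filter (fun p => x p.1 < x p.2 ∧ x p.2 - x p.1 ≤ 1) with hS
  have hSne : S.Nonempty := by
    rcases lt_or_gt_of_ne hne with hlt | hgt
    · exact ⟨(i0, j0), by simp [hS]; exact ⟨hlt, by linarith [hle'.1]⟩⟩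
    · exact ⟨(j0, i0), by simp [hS]; exact ⟨hgt, by linarith [hle'.2]⟩⟩
  obtain ⟨p, hpS, hmin⟩ := S.exists_min_image (fun p => x p.1) hSne
  rw [hS, Finset.mem_filter] at hpS
  obtain ⟨-, hlt, hd⟩ := hpS
  set N : Finset (Fin n) := Finset.univ.filter (fun k => |x k - x p.1| ≤ 1) with hN
  have hiN : p.1 ∈ N := by simp [hN]
  have hjN : p.2 ∈ N := by
    simp only [hN, Finset.mem_filter, Finset.mem_univ, true_and, abs_le]
    constructor <;> linarith
  have hlow : ∀ k ∈ N, x p.1 ≤ x k := by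
    intro k hk
    by_contra hk'
    push_neg at hk'
    simp only [hN, Finset.mem_filter, Finset.mem_univ, true_and, abs_le] at hk
    have hkS : (k, p.1) ∈ S := by
      rw [hS, Finset.mem_filter]
      exact ⟨Finset.mem_univ _, hk', by linarith [hk.1]⟩
    have := hmin _ hkS
    simp only at this
    linarith
  have hcardpos : 0 < N.card := Finset.card_pos.mpr ⟨p.1, hiN⟩
  have hsum : (N.card : ℝ) * x p.1 < ∑ k ∈ N, x k := by
    calc (N.card : ℝ) * x p.1 = ∑ _k ∈ N, x p.1 := by
          rw [Finset.sum_const, nsmul_eq_mul]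
      _ < ∑ k ∈ N, x k := Finset.sum_lt_sum hlow ⟨p.2, hjN, hlt⟩
  have hfix := congrFun h p.1
  rw [hkUpdate] at hfix
  rw [show Finset.univ.filter (fun j => |x j - x p.1| ≤ 1) = N from rfl] at hfix
  have hcard' : (N.card : ℝ) ≠ 0 := by positivity
  rw [div_eq_iff hcard'] at hfix
  linarith
end

section
/- For every configuration x : Fin n → ℝ, the HK dynamics reach a fixed point in finite time: there exists τ ∈ ℕ such that T(T^[τ](x)) = T^[τ](x), and consequently T^[t](x) = T^[τ](x) for all t ≥ τ, where T^[t] denotes the t-fold iterate of T. -/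
namespace HKProof

variable {n : ℕ}

noncomputable def nbhd (x : Fin n → ℝ) (i : Fin n) : Finset (Fin n) :=
  Finset.univ.filter (fun j => |x j - x i| ≤ 1)

lemma mem_nbhd {x : Fin n → ℝ} {i j : Fin n} : j ∈ nbhd x i ↔ |x j - x i| ≤ 1 := by
  simp [nbhd]

lemma self_mem_nbhd (x : Fin n → ℝ) (i : Fin n) : i ∈ nbhd x i := by
  simp [nbhd]

lemma nbhd_nonempty (x : Fin n → ℝ) (i : Fin n) : (nbhd x i).Nonempty :=
  ⟨i, self_mem_nbhd x i⟩

lemma hk_def (x : Fin n → ℝ) (i : Fin n) :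
    hkUpdate x i = (∑ j ∈ nbhd x i, x j) / ((nbhd x i).card : ℝ) := rfl

/-- The invariant: outside `S` everything is frozen (all neighbours share the value),
and everything outside `S` lies more than 1 below every member of `S`. -/
def Inv (S : Finset (Fin n)) (x : Fin n → ℝ) : Prop :=
  (∀ i ∉ S, ∀ j, |x j - x i| ≤ 1 → x j = x i) ∧ ∀ i ∉ S, ∀ j ∈ S, x i + 1 < x j

lemma frozen_fixed {x : Fin n → ℝ} {i : Fin n}
    (h : ∀ j, |x j - x i| ≤ 1 → x j = x i) : hkUpdate x i = x i := by
  rw [hk_def]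
  have hsum : ∑ j ∈ nbhd x i, x j = ∑ _j ∈ nbhd x i, x i :=
    Finset.sum_congr rfl (fun j hj => h j (mem_nbhd.mp hj))
  rw [hsum, Finset.sum_const, nsmul_eq_mul]
  have hpos : (0:ℝ) < (nbhd x i).card := by
    exact_mod_cast Finset.card_pos.mpr (nbhd_nonempty x i)
  field_simp

lemma locallyConst_fixed {x : Fin n → ℝ}
    (h : ∀ i j, |x j - x i| ≤ 1 → x j = x i) : hkUpdate x = x :=
  funext fun i => frozen_fixed (h i)

lemma nbhd_subset {S : Finset (Fin n)} {x : Fin n → ℝ} (hInv : Inv S x)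
    {j : Fin n} (hj : j ∈ S) : nbhd x j ⊆ S := by
  intro k hk
  by_contra hkS
  have h1 := hInv.2 k hkS j hj
  have h2 := mem_nbhd.mp hk
  rw [abs_le] at h2
  linarith [h2.2]

noncomputable def infS (S : Finset (Fin n)) (hS : S.Nonempty) (x : Fin n → ℝ) : ℝ :=
  S.inf' hS x

lemma infS_le {S : Finset (Fin n)} (hS : S.Nonempty) {x : Fin n → ℝ} {j : Fin n}
    (hj : j ∈ S) : infS S hS x ≤ x j :=
  Finset.inf'_le _ hj

lemma exists_infS (S : Finset (Fin n)) (hS : S.Nonempty) (x : Fin n → ℝ) :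
    ∃ j ∈ S, x j = infS S hS x := by
  obtain ⟨j, hj, h⟩ := Finset.exists_mem_eq_inf' hS x
  exact ⟨j, hj, h.symm⟩

noncomputable def Bset (S : Finset (Fin n)) (hS : S.Nonempty) (x : Fin n → ℝ) :
    Finset (Fin n) :=
  S.filter (fun j => x j ≤ infS S hS x + 1)

lemma mem_Bset {S : Finset (Fin n)} {hS : S.Nonempty} {x : Fin n → ℝ} {j : Fin n} :
    j ∈ Bset S hS x ↔ j ∈ S ∧ x j ≤ infS S hS x + 1 := Finset.mem_filter

lemma Bset_nonempty (S : Finset (Fin n)) (hS : S.Nonempty) (x : Fin n → ℝ) :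
    (Bset S hS x).Nonempty := by
  obtain ⟨j, hj, hje⟩ := exists_infS S hS x
  exact ⟨j, mem_Bset.mpr ⟨hj, by rw [hje]; linarith⟩⟩

noncomputable def wid (S : Finset (Fin n)) (hS : S.Nonempty) (x : Fin n → ℝ) : ℝ :=
  (Bset S hS x).sup' (Bset_nonempty S hS x) x - infS S hS x

lemma le_wid {S : Finset (Fin n)} {hS : S.Nonempty} {x : Fin n → ℝ} {j : Fin n}
    (hj : j ∈ Bset S hS x) : x j ≤ infS S hS x + wid S hS x := by
  have := Finset.le_sup' x hj
  unfold wid; linarith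

lemma exists_wid (S : Finset (Fin n)) (hS : S.Nonempty) (x : Fin n → ℝ) :
    ∃ j ∈ Bset S hS x, x j = infS S hS x + wid S hS x := by
  obtain ⟨j, hj, h⟩ := Finset.exists_mem_eq_sup' (Bset_nonempty S hS x) x
  exact ⟨j, hj, by rw [← h]; unfold wid; ring⟩

lemma wid_nonneg (S : Finset (Fin n)) (hS : S.Nonempty) (x : Fin n → ℝ) :
    0 ≤ wid S hS x := by
  obtain ⟨j, hj, hje⟩ := exists_infS S hS x
  have hjB : j ∈ Bset S hS x := mem_Bset.mpr ⟨hj, by rw [hje]; linarith⟩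
  have := le_wid hjB
  linarith [hje ▸ this]

lemma wid_le_one (S : Finset (Fin n)) (hS : S.Nonempty) (x : Fin n → ℝ) :
    wid S hS x ≤ 1 := by
  obtain ⟨j, hj, hje⟩ := exists_wid S hS x
  have := (mem_Bset.mp hj).2
  linarith

section avg
variable {s t : Finset (Fin n)} {f : Fin n → ℝ} {a c : ℝ}

lemma card_pos_real (hs : s.Nonempty) : (0:ℝ) < s.card := by
  exact_mod_cast Finset.card_pos.mpr hs

lemma le_avg (hs : s.Nonempty) (h : ∀ j ∈ s, a ≤ f j) :
    a ≤ (∑ j ∈ s, f j) / s.card := by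
  rw [le_div_iff₀ (card_pos_real hs)]
  calc a * s.card = ∑ _j ∈ s, a := by rw [Finset.sum_const, nsmul_eq_mul, mul_comm]
    _ ≤ ∑ j ∈ s, f j := Finset.sum_le_sum h

lemma avg_le (hs : s.Nonempty) (h : ∀ j ∈ s, f j ≤ a) :
    (∑ j ∈ s, f j) / s.card ≤ a := by
  rw [div_le_iff₀ (card_pos_real hs)]
  calc (∑ j ∈ s, f j) ≤ ∑ _j ∈ s, a := Finset.sum_le_sum h
    _ = a * s.card := by rw [Finset.sum_const, nsmul_eq_mul, mul_comm]

lemma add_div_card_le_avg (hs : s.Nonempty) {j₀ : Fin n} (hj₀ : j₀ ∈ s)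
    (h : ∀ j ∈ s, a ≤ f j) (hc : a + c ≤ f j₀) :
    a + c / s.card ≤ (∑ j ∈ s, f j) / s.card := by
  have hpos := card_pos_real hs
  rw [le_div_iff₀ hpos]
  have hsum : ∑ j ∈ s, f j = f j₀ + ∑ j ∈ s.erase j₀, f j :=
    (Finset.add_sum_erase s f hj₀).symm
  have h2 : (s.erase j₀).card • a ≤ ∑ j ∈ s.erase j₀, f j :=
    Finset.card_nsmul_le_sum _ _ _ (fun j hj => h j (Finset.mem_of_mem_erase hj))
  have hcard : (s.erase j₀).card = s.card - 1 := Finset.card_erase_of_mem hj₀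
  have h1 : (1:ℕ) ≤ s.card := Finset.card_pos.mpr hs
  have hcast : ((s.erase j₀).card : ℝ) = (s.card : ℝ) - 1 := by
    rw [hcard]; push_cast [Nat.cast_sub h1]; ring
  have h2' : ((s.card : ℝ) - 1) * a ≤ ∑ j ∈ s.erase j₀, f j := by
    rw [← hcast]; simpa [nsmul_eq_mul] using h2
  have : (a + c / s.card) * s.card = a * s.card + c := by
    field_simp
  rw [this, hsum]
  nlinarith [hc, h2']

lemma avg_le_add (hs : s.Nonempty) (hts : t ⊆ s) (h1 : ∀ j ∈ t, f j ≤ a)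
    (h2 : ∀ j ∈ s, f j ≤ a + c) (hc : 0 ≤ c) :
    (∑ j ∈ s, f j) / s.card ≤ a + (((s.card : ℝ) - t.card) * c) / s.card := by
  have hpos := card_pos_real hs
  rw [div_le_iff₀ hpos]
  have hsplit : ∑ j ∈ s, f j = (∑ j ∈ s \ t, f j) + ∑ j ∈ t, f j :=
    (Finset.sum_sdiff hts).symm
  have hb1 : ∑ j ∈ t, f j ≤ t.card • a :=
    Finset.sum_le_card_nsmul _ _ _ h1
  have hb2 : ∑ j ∈ s \ t, f j ≤ (s \ t).card • (a + c) :=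
    Finset.sum_le_card_nsmul _ _ _ (fun j hj => h2 j (Finset.mem_sdiff.mp hj).1)
  have hcard : ((s \ t).card : ℝ) = (s.card : ℝ) - t.card := by
    rw [Finset.card_sdiff_of_subset hts]
    push_cast [Nat.cast_sub (Finset.card_le_card hts)]; ring
  have hb2' : ∑ j ∈ s \ t, f j ≤ ((s.card : ℝ) - t.card) * (a + c) := by
    rw [← hcard]
    have := hb2
    rw [nsmul_eq_mul] at this
    linarith
  have hb1' : ∑ j ∈ t, f j ≤ (t.card : ℝ) * a := by simpa [nsmul_eq_mul] using hb1
  have htc : (t.card : ℝ) ≤ s.card := by exact_mod_cast Finset.card_le_card hts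
  rw [hsplit]
  have hexp : (a + ((s.card : ℝ) - t.card) * c / s.card) * s.card
      = a * s.card + ((s.card : ℝ) - t.card) * c := by field_simp
  rw [hexp]
  nlinarith [hb1', hb2']

end avg

section dyn
variable {S : Finset (Fin n)} {x : Fin n → ℝ}

lemma hk_frozen (hInv : Inv S x) {i : Fin n} (hi : i ∉ S) : hkUpdate x i = x i :=
  frozen_fixed (hInv.1 i hi)

lemma hk_ge_infS (hS : S.Nonempty) (hInv : Inv S x) {j : Fin n} (hj : j ∈ S) :
    infS S hS x ≤ hkUpdate x j := by
  rw [hk_def]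
  exact le_avg (nbhd_nonempty x j)
    (fun k hk => infS_le hS (nbhd_subset hInv hj hk))

lemma hk_le_supS (hS : S.Nonempty) (hInv : Inv S x) {j : Fin n} (hj : j ∈ S) :
    hkUpdate x j ≤ S.sup' hS x := by
  rw [hk_def]
  exact avg_le (nbhd_nonempty x j)
    (fun k hk => Finset.le_sup' x (nbhd_subset hInv hj hk))

lemma inv_step (hInv : Inv S x) : Inv S (hkUpdate x) := by
  constructor
  · intro i hi j hij
    rw [hk_frozen hInv hi] at hij ⊢
    by_cases hjS : j ∈ S
    · exfalso
      have hS : S.Nonempty := ⟨j, hjS⟩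
      have h1 : infS S hS x ≤ hkUpdate x j := hk_ge_infS hS hInv hjS
      obtain ⟨k, hk, hke⟩ := exists_infS S hS x
      have h2 := hInv.2 i hi k hk
      rw [abs_le] at hij
      linarith [hij.2, hke ▸ h2]
    · rw [hk_frozen hInv hjS] at hij ⊢
      exact hInv.1 i hi j hij
  · intro i hi j hj
    rw [hk_frozen hInv hi]
    have hS : S.Nonempty := ⟨j, hj⟩
    have h1 : infS S hS x ≤ hkUpdate x j := hk_ge_infS hS hInv hj
    obtain ⟨k, hk, hke⟩ := exists_infS S hS x
    have h2 := hInv.2 i hi k hk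
    linarith [hke ▸ h2]

lemma inv_iterate (hInv : Inv S x) (t : ℕ) : Inv S (hkUpdate^[t] x) := by
  induction t with
  | zero => exact hInv
  | succ t ih => rw [Function.iterate_succ_apply']; exact inv_step ih

lemma supS_mono (hS : S.Nonempty) (hInv : Inv S x) :
    S.sup' hS (hkUpdate x) ≤ S.sup' hS x :=
  Finset.sup'_le _ _ (fun j hj => hk_le_supS hS hInv hj)

/-- The key progress lemma: every agent of `S` moves at least `wid/n` above the old min. -/
lemma step_lower (hS : S.Nonempty) (hInv : Inv S x) {j : Fin n} (hj : j ∈ S) :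
    infS S hS x + wid S hS x / n ≤ hkUpdate x j := by
  set m := infS S hS x with hm
  set w := wid S hS x with hw
  have hw0 : 0 ≤ w := wid_nonneg S hS x
  have hw1 : w ≤ 1 := wid_le_one S hS x
  have hnpos : 0 < n := j.pos
  have hcard : ((nbhd x j).card : ℝ) ≤ n := by exact_mod_cast
    (by simpa [nbhd, Finset.card_univ] using
      Finset.card_filter_le (Finset.univ : Finset (Fin n)) (fun k => |x k - x j| ≤ 1))
  have hcpos : (0:ℝ) < (nbhd x j).card := card_pos_real (nbhd_nonempty x j)
  have hge : ∀ k ∈ nbhd x j, m ≤ x k := fun k hk => infS_le hS (nbhd_subset hInv hj hk)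
  have key : m + w / (nbhd x j).card ≤ hkUpdate x j := by
    rw [hk_def]
    by_cases hjB : x j ≤ m + 1
    · -- j sees the top of B
      obtain ⟨j₁, hj₁, hj₁e⟩ := exists_wid S hS x
      have hj₁S := (mem_Bset.mp hj₁).1
      have hj₁n : j₁ ∈ nbhd x j := by
        rw [mem_nbhd, abs_le]
        have h1 : m ≤ x j := infS_le hS hj
        have h2 : m ≤ x j₁ := infS_le hS hj₁S
        have h3 : x j₁ ≤ m + 1 := (mem_Bset.mp hj₁).2
        constructor <;> linarith
      exact add_div_card_le_avg (nbhd_nonempty x j) hj₁n hge (by rw [hj₁e])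
    · -- j itself is high
      push_neg at hjB
      exact add_div_card_le_avg (nbhd_nonempty x j) (self_mem_nbhd x j) hge
        (by linarith)
  have : w / (n:ℝ) ≤ w / (nbhd x j).card := by
    apply div_le_div_of_nonneg_left hw0 hcpos hcard
  linarith

lemma infS_step_lower (hS : S.Nonempty) (hInv : Inv S x) :
    infS S hS x + wid S hS x / n ≤ infS S hS (hkUpdate x) :=
  Finset.le_inf' _ _ (fun j hj => step_lower hS hInv hj)

/-- The min-agent's next value is at most `infS + wid`. -/
lemma infS_step_upper (hS : S.Nonempty) (hInv : Inv S x) :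
    infS S hS (hkUpdate x) ≤ infS S hS x + wid S hS x := by
  obtain ⟨j, hj, hje⟩ := exists_infS S hS x
  have h1 : infS S hS (hkUpdate x) ≤ hkUpdate x j := infS_le hS hj
  have h2 : hkUpdate x j ≤ infS S hS x + wid S hS x := by
    rw [hk_def]
    apply avg_le (nbhd_nonempty x j)
    intro k hk
    have hkS := nbhd_subset hInv hj hk
    have hkd := mem_nbhd.mp hk
    rw [abs_le] at hkd
    have hkB : k ∈ Bset S hS x := mem_Bset.mpr ⟨hkS, by rw [← hje] at *; linarith [hkd.2]⟩
    exact le_wid hkB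
  linarith

end dyn

section cases
variable {S : Finset (Fin n)} {x : Fin n → ℝ}

/-- Case (a): all of `S` within 1 of the min: two more steps gives a fixed point. -/
lemma consensus_step (hS : S.Nonempty) (hInv : Inv S x)
    (hall : ∀ j ∈ S, x j ≤ infS S hS x + 1) :
    hkUpdate (hkUpdate x) = hkUpdate x := by
  set m := infS S hS x with hm
  have hnb : ∀ j ∈ S, nbhd x j = S := by
    intro j hj
    apply Finset.Subset.antisymm (nbhd_subset hInv hj)
    intro k hk
    rw [mem_nbhd, abs_le]
    have h1 := infS_le (x := x) hS hj
    have h2 := infS_le (x := x) hS hk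
    have h3 := hall j hj
    have h4 := hall k hk
    constructor <;> linarith
  set c := (∑ k ∈ S, x k) / (S.card : ℝ) with hc
  have hcS : ∀ j ∈ S, hkUpdate x j = c := by
    intro j hj; rw [hk_def, hnb j hj]
  have hcm : m ≤ c := le_avg (f := x) hS (fun k hk => infS_le hS hk)
  obtain ⟨jm, hjm, hjme⟩ := exists_infS S hS x
  have hfro : ∀ i ∉ S, x i + 1 < m := by
    intro i hi
    have := hInv.2 i hi jm hjm
    rw [hjme] at this; exact this
  apply locallyConst_fixed
  intro i j hij
  by_cases hiS : i ∈ S <;> by_cases hjS : j ∈ S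
  · rw [hcS i hiS, hcS j hjS]
  · exfalso
    rw [hcS i hiS, hk_frozen hInv hjS] at hij
    have := hfro j hjS
    rw [abs_le] at hij
    linarith [hij.1]
  · exfalso
    rw [hcS j hjS, hk_frozen hInv hiS] at hij
    have := hfro i hiS
    rw [abs_le] at hij
    linarith [hij.2]
  · rw [hk_frozen hInv hiS, hk_frozen hInv hjS] at hij ⊢
    exact hInv.1 i hiS j hij

/-- Case (b1): if the width is small but there is a "bridge" agent just above the
bottom block, then the next width is large. -/
lemma gap_step (hS : S.Nonempty) (hInv : Inv S x)
    (hwid : wid S hS x ≤ 1 / (2 * n))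
    {jb : Fin n} (hjb : jb ∈ S) (hjb1 : infS S hS x + 1 < x jb)
    (hjb2 : x jb ≤ infS S hS x + wid S hS x + 1) :
    1 / n - wid S hS x ≤ wid S hS (hkUpdate x) := by
  set m := infS S hS x with hm
  set w := wid S hS x with hw
  have hw0 : 0 ≤ w := wid_nonneg S hS x
  have hw1 : w ≤ 1 := wid_le_one S hS x
  obtain ⟨js, hjs, hjse⟩ := exists_wid S hS x
  have hjsS := (mem_Bset.mp hjs).1
  have hnpos : 0 < n := jb.pos
  have hnR : (0:ℝ) < n := by exact_mod_cast hnpos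
  have hjbn : jb ∈ nbhd x js := by
    rw [mem_nbhd, abs_le]
    constructor <;> [skip; skip] <;> rw [hjse] <;> linarith
  have hge : ∀ k ∈ nbhd x js, m ≤ x k := fun k hk => infS_le hS (nbhd_subset hInv hjsS hk)
  have hBsub : Bset S hS x ⊆ nbhd x js := by
    intro k hk
    rw [mem_nbhd, abs_le]
    have h1 : m ≤ x k := infS_le hS (mem_Bset.mp hk).1
    have h2 : x k ≤ m + w := le_wid hk
    rw [hjse]
    constructor <;> linarith
  have hcpos : (0:ℝ) < (nbhd x js).card := card_pos_real (nbhd_nonempty x js)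
  have hcard : ((nbhd x js).card : ℝ) ≤ n := by
    exact_mod_cast (by simpa [nbhd, Finset.card_univ] using
      Finset.card_filter_le (Finset.univ : Finset (Fin n)) (fun k => |x k - x js| ≤ 1))
  have hlow : m + 1 / (nbhd x js).card ≤ hkUpdate x js := by
    rw [hk_def]
    exact add_div_card_le_avg (nbhd_nonempty x js) hjbn hge (le_of_lt hjb1)
  have hlow' : m + 1 / (n : ℝ) ≤ hkUpdate x js := by
    have : 1 / (n:ℝ) ≤ 1 / (nbhd x js).card :=
      div_le_div_of_nonneg_left one_pos.le hcpos hcard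
    linarith
  set k := ((nbhd x js).card : ℝ) with hk
  set kB := ((Bset S hS x).card : ℝ) with hkB
  have hup : hkUpdate x js ≤ (m + w) + ((k - kB) * 1) / k := by
    rw [hk_def]
    apply avg_le_add (nbhd_nonempty x js) hBsub
    · intro j hj; exact le_wid hj
    · intro j hj
      have hd := mem_nbhd.mp hj
      rw [abs_le] at hd
      have := hd.1
      rw [hjse] at this
      linarith
    · norm_num
  have hkB1 : (1:ℝ) ≤ kB := by
    rw [hkB]; exact_mod_cast Finset.card_pos.mpr (Bset_nonempty S hS x)
  have hkkB : kB ≤ k := by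
    rw [hk, hkB]; exact_mod_cast Finset.card_le_card hBsub
  have hinf_lo : m + w / n ≤ infS S hS (hkUpdate x) := infS_step_lower hS hInv
  have hinf_hi : infS S hS (hkUpdate x) ≤ m + w := infS_step_upper hS hInv
  have hq : (k - kB) * 1 / k ≤ 1 - 1 / n := by
    rw [mul_one, div_le_iff₀ hcpos]
    have h1 : 1 / (n:ℝ) * k ≤ 1 := by
      rw [div_mul_eq_mul_div, one_mul, div_le_one hnR]; exact hcard
    nlinarith
  have hwn : w * ((n:ℝ) - 1) ≤ 1 := by
    have h2 : w * ((n:ℝ) - 1) ≤ 1 / (2 * n) * ((n:ℝ) - 1) := by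
      apply mul_le_mul_of_nonneg_right hwid; linarith
    have h3 : 1 / (2 * (n:ℝ)) * ((n:ℝ) - 1) ≤ 1 := by
      rw [div_mul_eq_mul_div, one_mul, div_le_one (by linarith)]; linarith
    linarith
  have hjs_in : hkUpdate x js ≤ infS S hS (hkUpdate x) + 1 := by
    have hstep : w + (1 - 1 / (n:ℝ)) ≤ w / n + 1 := by
      rw [← sub_nonneg]
      have hexp : (w / n + 1) - (w + (1 - 1/(n:ℝ))) = (1 - w * ((n:ℝ)-1)) / n := by
        field_simp; ring
      rw [hexp]
      exact div_nonneg (by linarith) (le_of_lt hnR)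
    linarith [hup, hq, hinf_lo]
  have hjsnew : js ∈ Bset S hS (hkUpdate x) := mem_Bset.mpr ⟨hjsS, hjs_in⟩
  have hfin : hkUpdate x js ≤ infS S hS (hkUpdate x) + wid S hS (hkUpdate x) :=
    le_wid hjsnew
  linarith [hlow', hinf_hi]

/-- Case (b2): the bottom block separates by a gap `> 1`; it collapses to a frozen
cluster and the invariant passes to the remaining agents. -/
lemma split_step (hS : S.Nonempty) (hInv : Inv S x)
    (hS' : (S.filter (fun j => infS S hS x + 1 < x j)).Nonempty)
    (hb2 : ∀ j ∈ S, infS S hS x + 1 < x j → infS S hS x + wid S hS x + 1 < x j) :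
    Inv (S.filter (fun j => infS S hS x + 1 < x j)) (hkUpdate x) := by
  set m := infS S hS x with hm
  set w := wid S hS x with hw
  set S' := S.filter (fun j => m + 1 < x j) with hS'def
  have hw0 : 0 ≤ w := wid_nonneg S hS x
  have hw1 : w ≤ 1 := wid_le_one S hS x
  set b := S'.inf' hS' x with hbdef
  obtain ⟨jb, hjbS', hjbe⟩ := Finset.exists_mem_eq_inf' hS' x
  have hjbS : jb ∈ S := (Finset.mem_filter.mp hjbS').1
  have hbgt : m + w + 1 < b := by
    rw [hbdef, hjbe]
    exact hb2 jb hjbS (Finset.mem_filter.mp hjbS').2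
  have hBc : ∀ j, j ∈ S → j ∉ S' → j ∈ Bset S hS x := by
    intro j hj hj'
    have hnlt : ¬ (m + 1 < x j) := fun h => hj' (Finset.mem_filter.mpr ⟨hj, h⟩)
    exact mem_Bset.mpr ⟨hj, le_of_not_gt hnlt⟩
  have hnbB : ∀ j ∈ Bset S hS x, nbhd x j = Bset S hS x := by
    intro j hj
    apply Finset.Subset.antisymm
    · intro k hk
      have hkS : k ∈ S := nbhd_subset hInv (mem_Bset.mp hj).1 hk
      have hkd := mem_nbhd.mp hk
      rw [abs_le] at hkd
      apply hBc k hkS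
      intro hkS'
      have hble : b ≤ x k := by rw [hbdef]; exact Finset.inf'_le x hkS'
      have hxj : x j ≤ m + w := le_wid hj
      linarith [hkd.2]
    · intro k hk
      rw [mem_nbhd, abs_le]
      have h1 : m ≤ x k := infS_le hS (mem_Bset.mp hk).1
      have h2 : x k ≤ m + w := le_wid hk
      have h3 : m ≤ x j := infS_le hS (mem_Bset.mp hj).1
      have h4 : x j ≤ m + w := le_wid hj
      constructor <;> linarith
  set c := (∑ k ∈ Bset S hS x, x k) / ((Bset S hS x).card : ℝ) with hcdef
  have hcB : ∀ j ∈ Bset S hS x, hkUpdate x j = c := by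
    intro j hj; rw [hk_def, hnbB j hj]
  have hcge : m ≤ c := le_avg (f := x) (Bset_nonempty S hS x)
    (fun k hk => infS_le hS (mem_Bset.mp hk).1)
  have hcle : c ≤ m + w := avg_le (Bset_nonempty S hS x) (fun k hk => le_wid hk)
  have hnbS' : ∀ j ∈ S', nbhd x j ⊆ S' := by
    intro j hj k hk
    have hjS : j ∈ S := (Finset.mem_filter.mp hj).1
    have hkS : k ∈ S := nbhd_subset hInv hjS hk
    by_contra hkS'
    have hkB := hBc k hkS hkS'
    have h2 : x k ≤ m + w := le_wid hkB
    have h5 : b ≤ x j := by rw [hbdef]; exact Finset.inf'_le x hj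
    have hkd := mem_nbhd.mp hk
    rw [abs_le] at hkd
    linarith [hkd.1]
  have hS'low : ∀ j ∈ S', b ≤ hkUpdate x j := by
    intro j hj
    rw [hk_def]
    apply le_avg (nbhd_nonempty x j)
    intro k hk
    rw [hbdef]
    exact Finset.inf'_le x (hnbS' j hj hk)
  obtain ⟨jm, hjm, hjme⟩ := exists_infS S hS x
  have hmfro : ∀ i ∉ S, x i + 1 < m := by
    intro i hi
    have := hInv.2 i hi jm hjm
    rw [hjme] at this
    exact this
  constructor
  · intro i hi j hij
    by_cases hiS : i ∈ S
    · have hiB := hBc i hiS hi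
      rw [hcB i hiB] at hij ⊢
      by_cases hjS : j ∈ S
      · by_cases hjS' : j ∈ S'
        · exfalso
          have := hS'low j hjS'
          rw [abs_le] at hij
          linarith [hij.2]
        · rw [hcB j (hBc j hjS hjS')]
      · exfalso
        rw [hk_frozen hInv hjS] at hij
        have := hmfro j hjS
        rw [abs_le] at hij
        linarith [hij.1]
    · rw [hk_frozen hInv hiS] at hij ⊢
      have him := hmfro i hiS
      by_cases hjS : j ∈ S
      · exfalso
        by_cases hjS' : j ∈ S'
        · have := hS'low j hjS'
          rw [abs_le] at hij
          linarith [hij.2]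
        · rw [hcB j (hBc j hjS hjS')] at hij
          rw [abs_le] at hij
          linarith [hij.2]
      · rw [hk_frozen hInv hjS] at hij ⊢
        exact hInv.1 i hiS j hij
  · intro i hi j hj
    have hbj := hS'low j hj
    by_cases hiS : i ∈ S
    · rw [hcB i (hBc i hiS hi)]
      linarith
    · rw [hk_frozen hInv hiS]
      have h6 := hInv.2 i hiS jb hjbS
      have h7 : x jb = b := by rw [hbdef, hjbe]
      linarith

end cases

lemma fixed_tail {α : Type*} {f : α → α} {z : α} (hz : f z = z) : ∀ d, f^[d] z = z := by
  intro d
  induction d with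
  | zero => rfl
  | succ d ihd => rw [Function.iterate_succ_apply', ihd, hz]

/-- Main lemma: under the invariant, the dynamics reach a fixed point. -/
lemma main (k : ℕ) : ∀ S : Finset (Fin n), S.card ≤ k → ∀ x : Fin n → ℝ, Inv S x →
    ∃ τ : ℕ, hkUpdate (hkUpdate^[τ] x) = hkUpdate^[τ] x := by
  induction k with
  | zero =>
    intro S hcard x hInv
    have hSe : S = ∅ := Finset.card_eq_zero.mp (Nat.le_zero.mp hcard)
    refine ⟨0, ?_⟩
    simp only [Function.iterate_zero_apply]
    exact locallyConst_fixed (fun i j hij => hInv.1 i (by simp [hSe]) j hij)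
  | succ k ih =>
    intro S hcard x hInv
    rcases Finset.eq_empty_or_nonempty S with hSe | hS
    · refine ⟨0, ?_⟩
      simp only [Function.iterate_zero_apply]
      exact locallyConst_fixed (fun i j hij => hInv.1 i (by simp [hSe]) j hij)
    obtain ⟨j0, hj0⟩ := hS
    have hS : S.Nonempty := ⟨j0, hj0⟩
    have hnpos : 0 < n := j0.pos
    have hnR : (0:ℝ) < n := by exact_mod_cast hnpos
    set ε : ℝ := 1 / (2 * n) with hε
    have hεpos : 0 < ε := by rw [hε]; positivity
    have hInvT : ∀ t, Inv S (hkUpdate^[t] x) := inv_iterate hInv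
    set m : ℕ → ℝ := fun t => infS S hS (hkUpdate^[t] x) with hmdef
    set w : ℕ → ℝ := fun t => wid S hS (hkUpdate^[t] x) with hwdef
    have hw0 : ∀ t, 0 ≤ w t := fun t => wid_nonneg S hS _
    have hmono : ∀ t, m t + w t / n ≤ m (t+1) := by
      intro t
      have h := infS_step_lower hS (hInvT t)
      simp only [hmdef, hwdef]
      rw [Function.iterate_succ_apply']
      exact h
    have hsupb : ∀ t, S.sup' hS (hkUpdate^[t] x) ≤ S.sup' hS x := by
      intro t
      induction t with
      | zero => exact le_refl _
      | succ t ihs =>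
        rw [Function.iterate_succ_apply']
        exact le_trans (supS_mono hS (hInvT t)) ihs
    have hub : ∀ t, m t ≤ S.sup' hS x := by
      intro t
      have h1 : m t ≤ (hkUpdate^[t] x) j0 := infS_le hS hj0
      have h2 : (hkUpdate^[t] x) j0 ≤ S.sup' hS (hkUpdate^[t] x) :=
        Finset.le_sup' _ hj0
      exact le_trans (le_trans h1 h2) (hsupb t)
    have hsum : ∀ T : ℕ, m 0 + (∑ i ∈ Finset.range T, w i) / n ≤ m T := by
      intro T
      induction T with
      | zero => simp
      | succ T ihT =>
        have h := hmono T
        rw [Finset.sum_range_succ, add_div]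
        linarith
    have hsum' : ∀ T : ℕ, (∑ i ∈ Finset.range T, w i) ≤ n * (S.sup' hS x - m 0) := by
      intro T
      have h1 := hsum T
      have h2 := hub T
      have h3 : (∑ i ∈ Finset.range T, w i) / n ≤ S.sup' hS x - m 0 := by linarith
      rw [div_le_iff₀ hnR] at h3
      nlinarith
    have hgood : ∃ t, w t < ε ∧ w (t+1) < ε := by
      by_contra hcon
      push_neg at hcon
      have hpair : ∀ t, ε ≤ w t + w (t+1) := by
        intro t
        rcases le_or_gt ε (w t) with h | h
        · linarith [hw0 (t+1)]
        · linarith [hcon t h, hw0 t]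
      have hKsum : ∀ K : ℕ, (K:ℝ) * ε ≤ ∑ i ∈ Finset.range (2*K), w i := by
        intro K
        induction K with
        | zero => simp
        | succ K ihK =>
          have h2 : 2*(K+1) = 2*K + 1 + 1 := by ring
          rw [h2, Finset.sum_range_succ, Finset.sum_range_succ]
          push_cast
          have := hpair (2*K)
          linarith
      obtain ⟨K, hK⟩ := exists_nat_gt ((n * (S.sup' hS x - m 0)) / ε)
      have h1 := hKsum K
      have h2 := hsum' (2*K)
      rw [div_lt_iff₀ hεpos] at hK
      linarith
    obtain ⟨t0, ht0, ht0'⟩ := hgood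
    set y := hkUpdate^[t0] x with hy
    have hInvy : Inv S y := hInvT t0
    by_cases hall : ∀ j ∈ S, y j ≤ infS S hS y + 1
    · refine ⟨t0 + 1, ?_⟩
      rw [Function.iterate_succ_apply']
      exact consensus_step hS hInvy hall
    · push_neg at hall
      obtain ⟨j1, hj1S, hj1⟩ := hall
      set S' := S.filter (fun j => infS S hS y + 1 < y j) with hS'def
      have hS'ne : S'.Nonempty := ⟨j1, Finset.mem_filter.mpr ⟨hj1S, hj1⟩⟩
      by_cases hb : S'.inf' hS'ne y ≤ infS S hS y + wid S hS y + 1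
      · exfalso
        obtain ⟨jb, hjbS', hjbe⟩ := Finset.exists_mem_eq_inf' hS'ne y
        have hjbS : jb ∈ S := (Finset.mem_filter.mp hjbS').1
        have hjb1 : infS S hS y + 1 < y jb := (Finset.mem_filter.mp hjbS').2
        have hjb2 : y jb ≤ infS S hS y + wid S hS y + 1 := by
          rw [← hjbe]; exact hb
        have hwidy : wid S hS y ≤ 1 / (2 * n) := by
          have : w t0 < ε := ht0
          rw [hε] at this
          exact le_of_lt this
        have hkey := gap_step hS hInvy hwidy hjbS hjb1 hjb2
        have hw1 : wid S hS (hkUpdate y) = w (t0 + 1) := by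
          simp only [hwdef]
          rw [Function.iterate_succ_apply']
        have hwt0 : wid S hS y = w t0 := rfl
        have h2e : (1:ℝ) / n = 2 * ε := by
          rw [hε]; field_simp
        rw [hwt0, hw1, h2e] at hkey
        linarith
      · push_neg at hb
        have hb2 : ∀ j ∈ S, infS S hS y + 1 < y j →
            infS S hS y + wid S hS y + 1 < y j := by
          intro j hj hlt
          have : S'.inf' hS'ne y ≤ y j :=
            Finset.inf'_le y (Finset.mem_filter.mpr ⟨hj, hlt⟩)
          linarith
        have hInv' : Inv S' (hkUpdate y) := split_step hS hInvy hS'ne hb2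
        have hcard' : S'.card ≤ k := by
          have hss : S' ⊂ S := by
            rw [Finset.ssubset_iff_of_subset (Finset.filter_subset _ _)]
            obtain ⟨jm, hjm, hjme⟩ := exists_infS S hS y
            refine ⟨jm, hjm, ?_⟩
            intro hjm'
            have := (Finset.mem_filter.mp hjm').2
            rw [hjme] at this
            linarith
          have := Finset.card_lt_card hss
          omega
        obtain ⟨τ', hτ'⟩ := ih S' hcard' (hkUpdate y) hInv'
        refine ⟨τ' + (t0 + 1), ?_⟩
        rw [Function.iterate_add_apply]
        have hstep : hkUpdate^[t0+1] x = hkUpdate y := by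
          rw [Function.iterate_succ_apply', hy]
        rw [hstep]
        exact hτ'

end HKProof

/-- The HK dynamics reach a fixed point in finite time: there is a time `τ` such that
`T^[τ] x` is a fixed point of `T`, and consequently the dynamics are constant from time
`τ` onwards. -/
theorem hkUpdate_reaches_fixed_point {n : ℕ} (x : Fin n → ℝ) :
    ∃ τ : ℕ, hkUpdate (hkUpdate^[τ] x) = hkUpdate^[τ] x ∧
      ∀ t : ℕ, τ ≤ t → hkUpdate^[t] x = hkUpdate^[τ] x := by
  have hInv : HKProof.Inv Finset.univ x :=
    ⟨fun i hi => absurd (Finset.mem_univ i) hi,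
     fun i hi => absurd (Finset.mem_univ i) hi⟩
  obtain ⟨τ, hτ⟩ := HKProof.main Finset.univ.card Finset.univ le_rfl x hInv
  refine ⟨τ, hτ, ?_⟩
  intro t ht
  obtain ⟨d, rfl⟩ := Nat.exists_eq_add_of_le ht
  rw [add_comm, Function.iterate_add_apply]
  exact HKProof.fixed_tail hτ d
end

section
/- Let x : Fin n → ℝ be nondecreasing and let i ≤ j be indices. Then i and j lie in the same connected component of the geometric graph of x if and only if x(k+1) − x(k) ≤ 1 for every k with i ≤ k < j. In particular, for nondecreasing configurations, every connected component of the geometric graph is an interval of indices. -/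
/-!
For a nondecreasing configuration, `x r - x l` bounds `|x a - x b|` from below whenever
`a ≤ l < r ≤ b`. Hence a gap `x (k + 1) - x k > 1` leaves no edge between `{a ≤ k}` and its
complement, and these two sets cannot be joined by a walk. Conversely, if every gap between
`i` and `j` is at most `1`, then consecutive indices are adjacent and `i, i + 1, …, j` is a walk.
-/

open Order Set

namespace SimpleGraph

variable {V : Type*} {G : SimpleGraph V}

theorem Reachable.mem_of_forall_adj_mem {s : Set V} (hs : ∀ ⦃u v⦄, G.Adj u v → u ∈ s → v ∈ s)
    {u v : V} (huv : G.Reachable u v) (hu : u ∈ s) : v ∈ s := by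
  rw [reachable_iff_reflTransGen] at huv
  induction huv with
  | refl => exact hu
  | tail _ hadj ih => exact hs hadj ih

theorem reachable_of_forall_adj_succ [PartialOrder V] [SuccOrder V] [IsSuccArchimedean V]
    {a b : V} (hab : a ≤ b) (h : ∀ k ∈ Ico a b, G.Adj k (succ k)) : G.Reachable a b :=
  (reachable_iff_reflTransGen a b).2 (reflTransGen_of_succ_of_le _ h hab)

end SimpleGraph

theorem Fin.covBy_mk_add_one {n k : ℕ} (hk : k + 1 < n) :
    (⟨k, by omega⟩ : Fin n) ⋖ ⟨k + 1, hk⟩ :=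
  Fin.covBy_iff.2 (covBy_add_one k)

section Monotone

variable {n : ℕ} {x : Fin n → ℝ}

theorem geomGraph_adj_of_lt (hx : Monotone x) {l r : Fin n} (hlr : l < r)
    (hgap : x r - x l ≤ 1) : (geomGraph x).Adj l r := by
  refine ⟨hlr.ne, ?_⟩
  rw [abs_sub_comm, abs_of_nonneg (sub_nonneg.2 (hx hlr.le))]
  exact hgap

theorem geomGraph_adj_le_of_covBy (hx : Monotone x) {l r : Fin n} (hlr : l ⋖ r)
    (hgap : 1 < x r - x l) {a b : Fin n} (hab : (geomGraph x).Adj a b) (ha : a ≤ l) : b ≤ l := by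
  by_contra hb
  have hrb : r ≤ b := hlr.ge_of_gt (not_le.1 hb)
  have hxab := (abs_le.1 hab.2).1
  linarith [hx ha, hx hrb]

theorem geomGraph_gap_le_one_of_reachable (hx : Monotone x) {a b l r : Fin n}
    (hab : (geomGraph x).Reachable a b) (hlr : l ⋖ r) (ha : a ≤ l) (hb : r ≤ b) :
    x r - x l ≤ 1 := by
  by_contra! hgap
  have hbl : b ≤ l := hab.mem_of_forall_adj_mem (s := Iic l)
    (fun _ _ hadj hu => geomGraph_adj_le_of_covBy hx hlr hgap hadj hu) ha
  exact (hlr.lt.trans_le hb).not_ge hbl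

end Monotone

/-- For a nondecreasing configuration, indices `i ≤ j` lie in the same connected
component of the geometric graph iff all consecutive gaps between indices `i` and `j`
are at most `1`; in particular connected components are intervals of indices. -/
theorem geomGraph_reachable_iff_gaps {n : ℕ} (x : Fin n → ℝ) (hx : Monotone x)
    (i j : Fin n) (hij : i ≤ j) :
    (geomGraph x).Reachable i j ↔
      ∀ k : ℕ, (i : ℕ) ≤ k → (hk : k < (j : ℕ)) →
        x ⟨k + 1, by have := j.isLt; omega⟩ - x ⟨k, by have := j.isLt; omega⟩ ≤ 1 := by
  constructor
  · intro hreach k hik hkj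
    exact geomGraph_gap_le_one_of_reachable hx hreach (Fin.covBy_mk_add_one _)
      (Fin.le_def.2 hik) (Fin.le_def.2 hkj)
  · intro hgaps
    refine SimpleGraph.reachable_of_forall_adj_succ hij fun k ⟨hik, hkj⟩ => ?_
    have hcov : k ⋖ ⟨k + 1, _⟩ := Fin.covBy_mk_add_one (by omega)
    rw [hcov.succ_eq]
    exact geomGraph_adj_of_lt hx hcov.lt (hgaps k hik hkj)
end
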